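/- Assume P is transitive and asymmetric. Then the following three statements are equivalent: (i) extensionality with respect to overlap: ∀ x y, (∀ u, Ov u x ↔ Ov u y) → x = y; (ii) extensionality with respect to exteriority: ∀ x y, (∀ u, Ext u x ↔ Ext u y) → x = y; (iii) uniqueness of mereological sums: ∀ S x y, Sum x S → Sum y S → x = y. -/

import Mathlib

variable {U : Type*}

/-- `x` is an ingrediens of `y`. -/
def Ing (P : U → U → Prop) (x y : U) : Prop := x = y ∨ P x y

/-- `x` and `y` overlap. -/
def Ov (P : U → U → Prop) (x y : U) : Prop := ∃ z, Ing P z x ∧ Ing P z y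

/-- `x` is exterior to `y`. -/
def MExt (P : U → U → Prop) (x y : U) : Prop := ¬ Ov P x y

/-- `x` is a mereological sum of all elements of `S`. -/
def MSum (P : U → U → Prop) (x : U) (S : Set U) : Prop :=
  (∀ s ∈ S, Ing P s x) ∧ ∀ u, Ing P u x → ∃ s ∈ S, Ov P s u

/-- `x` is a supremum (least upper bound) of `S`. -/
def MSup (P : U → U → Prop) (x : U) (S : Set U) : Prop :=
  (∀ s ∈ S, Ing P s x) ∧ ∀ u, (∀ s ∈ S, Ing P s u) → Ing P x u

/-- `x` and `y` cross (properly overlap). -/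
def POv (P : U → U → Prop) (x y : U) : Prop :=
  x ≠ y ∧ ¬ P x y ∧ ¬ P y x ∧ ∃ z, P z x ∧ P z y

/-! Exteriority is the negation of overlap, so (i) and (ii) say the same thing. Two sums of the
same set are overlapped by the same objects, so (i) gives (iii). Conversely, if `x` and `y` are
overlapped by the same objects, both are sums of the set of their common ingredients, so (iii)
gives (i). -/

section

variable {P : U → U → Prop}

theorem Ing.refl (x : U) : Ing P x x := Or.inl rfl

theorem Ing.trans (htrans : ∀ x y z, P x y → P y z → P x z) {a b c : U}
    (hab : Ing P a b) (hbc : Ing P b c) : Ing P a c := by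
  rcases hab with rfl | hab
  · exact hbc
  rcases hbc with rfl | hbc
  · exact Or.inr hab
  · exact Or.inr (htrans _ _ _ hab hbc)

theorem Ov.of_ing {u x : U} (h : Ing P u x) : Ov P u x := ⟨u, Ing.refl u, h⟩

theorem ov_iff_iff_mExt_iff {x y : U} :
    (∀ u, Ov P u x ↔ Ov P u y) ↔ ∀ u, MExt P u x ↔ MExt P u y :=
  forall_congr' fun _ => not_iff_not.symm

theorem MSum.ov_of_ov (htrans : ∀ x y z, P x y → P y z → P x z) {S : Set U} {x y u : U}
    (hx : MSum P x S) (hy : MSum P y S) (hu : Ov P u x) : Ov P u y := by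
  obtain ⟨z, hzu, hzx⟩ := hu
  obtain ⟨s, hs, w, hws, hwz⟩ := hx.2 z hzx
  exact ⟨w, hwz.trans htrans hzu, hws.trans htrans (hy.1 s hs)⟩

theorem mSum_ing_inter_ing (htrans : ∀ x y z, P x y → P y z → P x z) {x y : U}
    (h : ∀ u, Ing P u x → Ov P u y) : MSum P x ({u | Ing P u x} ∩ {u | Ing P u y}) := by
  refine ⟨fun s hs => hs.1, fun u hux => ?_⟩
  obtain ⟨z, hzu, hzy⟩ := h u hux
  exact ⟨z, ⟨hzu.trans htrans hux, hzy⟩, Ov.of_ing hzu⟩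

end

theorem stmt_16_general (P : U → U → Prop)
    (htrans : ∀ x y z, P x y → P y z → P x z) :
    ((∀ x y : U, (∀ u, Ov P u x ↔ Ov P u y) → x = y) ↔
      (∀ x y : U, (∀ u, MExt P u x ↔ MExt P u y) → x = y)) ∧
    ((∀ x y : U, (∀ u, MExt P u x ↔ MExt P u y) → x = y) ↔
      (∀ (S : Set U) (x y : U), MSum P x S → MSum P y S → x = y)) := by
  have ov_iff_ext : (∀ x y : U, (∀ u, Ov P u x ↔ Ov P u y) → x = y) ↔
      (∀ x y : U, (∀ u, MExt P u x ↔ MExt P u y) → x = y) :=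
    forall₂_congr fun _ _ => imp_congr_left ov_iff_iff_mExt_iff
  refine ⟨ov_iff_ext, ov_iff_ext.symm.trans ⟨?_, ?_⟩⟩
  · intro hext S x y hx hy
    exact hext x y fun u => ⟨hx.ov_of_ov htrans hy, hy.ov_of_ov htrans hx⟩
  · intro huniq x y hxy
    have hx := mSum_ing_inter_ing htrans fun u hu => (hxy u).1 (Ov.of_ing hu)
    have hy := mSum_ing_inter_ing htrans fun u hu => (hxy u).2 (Ov.of_ing hu)
    exact huniq _ x y hx (Set.inter_comm _ _ ▸ hy)

theorem stmt_16 (P : U → U → Prop)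
    (htrans : ∀ x y z, P x y → P y z → P x z)
    (hasym : ∀ x y, ¬ (P x y ∧ P y x)) :
    ((∀ x y : U, (∀ u, Ov P u x ↔ Ov P u y) → x = y) ↔
      (∀ x y : U, (∀ u, MExt P u x ↔ MExt P u y) → x = y)) ∧
    ((∀ x y : U, (∀ u, MExt P u x ↔ MExt P u y) → x = y) ↔
      (∀ (S : Set U) (x y : U), MSum P x S → MSum P y S → x = y)) :=
  stmt_16_general P htrans
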